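/- Let X be a compact manifold of dimension n with Betti numbers b^j, admitting a free torus action as above with quotient Y = T\X of Betti numbers b^p(Y), so that b^j(X) = ∑_{k} C(r,k) b^{j−k}(Y). Define χ_r(X) = ∑_{j=0}^{n} (−1)^{j+r} C(j,r) b^j(X). Then χ_r(X) = χ(Y), the ordinary Euler characteristic of Y. -/
import Mathlib

lemma chi_key_identity (r : ℕ) : ∀ p : ℕ,
    ∑ k ∈ Finset.range (r + 1), (-1 : ℤ) ^ (k + r) * (r.choose k : ℤ) * ((p + k).choose r : ℤ) = 1 := by
  induction r with
  | zero => intro p; simp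
  | succ r ih =>
    intro p
    rw [Finset.sum_range_succ']
    have h1 : ∀ k ∈ Finset.range (r + 1),
        (-1 : ℤ) ^ (k + 1 + (r + 1)) * ((r+1).choose (k+1) : ℤ) * ((p + (k+1)).choose (r+1) : ℤ)
        = (-1 : ℤ) ^ (k + r) * (r.choose k : ℤ) * (((p+1) + k).choose (r+1) : ℤ)
          + (-1 : ℤ) ^ (k + r) * (r.choose (k+1) : ℤ) * ((p + (k+1)).choose (r+1) : ℤ) := by
      intro k _
      rw [Nat.choose_succ_succ]
      push_cast
      have : (-1 : ℤ) ^ (k + 1 + (r + 1)) = (-1) ^ (k + r) := by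
        rw [show k + 1 + (r+1) = (k + r) + 2 by ring, pow_add]; ring
      rw [this]
      have : p + (k + 1) = (p + 1) + k := by ring
      rw [this]; ring
    rw [Finset.sum_congr rfl h1, Finset.sum_add_distrib]
    have h2 : ∑ k ∈ Finset.range (r + 1),
        (-1 : ℤ) ^ (k + r) * (r.choose (k+1) : ℤ) * ((p + (k+1)).choose (r+1) : ℤ)
        = (∑ k ∈ Finset.range (r + 1),
            (-1 : ℤ) ^ (k + 1 + r) * (r.choose (k+1) : ℤ) * ((p + (k+1)).choose (r+1) : ℤ))
          * (-1) := by
      rw [Finset.sum_mul]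
      refine Finset.sum_congr rfl fun k _ => ?_
      rw [show k + 1 + r = (k + r) + 1 by ring, pow_succ]; ring
    rw [h2]
    have h3 : (∑ k ∈ Finset.range (r + 1),
        (-1 : ℤ) ^ (k + 1 + r) * (r.choose (k+1) : ℤ) * ((p + (k+1)).choose (r+1) : ℤ))
        = (∑ k ∈ Finset.range (r + 2),
            (-1 : ℤ) ^ (k + r) * (r.choose k : ℤ) * ((p + k).choose (r+1) : ℤ))
          - (-1 : ℤ) ^ r * ((p).choose (r+1) : ℤ) := by
      rw [Finset.sum_range_succ' (fun k => (-1 : ℤ) ^ (k + r) * (r.choose k : ℤ) * ((p + k).choose (r+1) : ℤ))]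
      simp [add_comm]
    rw [h3]
    have h4 : ∑ k ∈ Finset.range (r + 2),
        (-1 : ℤ) ^ (k + r) * (r.choose k : ℤ) * ((p + k).choose (r+1) : ℤ)
        = ∑ k ∈ Finset.range (r + 1),
            (-1 : ℤ) ^ (k + r) * (r.choose k : ℤ) * ((p + k).choose (r+1) : ℤ) := by
      rw [Finset.sum_range_succ]
      simp
    rw [h4]
    have h5 : ∑ k ∈ Finset.range (r + 1),
        (-1 : ℤ) ^ (k + r) * (r.choose k : ℤ) * (((p+1) + k).choose (r+1) : ℤ)
        - ∑ k ∈ Finset.range (r + 1),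
            (-1 : ℤ) ^ (k + r) * (r.choose k : ℤ) * ((p + k).choose (r+1) : ℤ)
        = ∑ k ∈ Finset.range (r + 1),
            (-1 : ℤ) ^ (k + r) * (r.choose k : ℤ) * ((p + k).choose r : ℤ) := by
      rw [← Finset.sum_sub_distrib]
      refine Finset.sum_congr rfl fun k _ => ?_
      have : (p + 1) + k = (p + k) + 1 := by ring
      rw [this, Nat.choose_succ_succ']
      push_cast; ring
    have h0 : (-1 : ℤ) ^ (0 + (r + 1)) * (((r+1).choose 0 : ℕ) : ℤ) * ((p + 0).choose (r+1) : ℤ)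
        = - ((-1:ℤ)^r * (p.choose (r+1) : ℤ)) := by
      rw [show 0 + (r+1) = r + 1 by ring, pow_succ]
      simp
    rw [h0]
    linear_combination h5 + ih p

/-- If the Betti numbers of a compact `n`-manifold `X` with a free action of an `r`-torus
with quotient `Y` satisfy `b^j(X) = ∑_k C(r,k) b^{j-k}(Y)`, then the `r`-th Euler
characteristic `χ_r(X) = ∑_j (-1)^{j+r} C(j,r) b^j(X)` equals the ordinary Euler
characteristic `χ(Y) = ∑_p (-1)^p b^p(Y)`. -/
theorem chi_r_eq_chi_quotient (n r : ℕ) (hrn : r ≤ n) (bX bY : ℕ → ℕ)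
    (hb : ∀ j, (bX j : ℤ) =
      ∑ k ∈ Finset.range (r + 1), (r.choose k : ℤ) *
        (if k ≤ j then (bY (j - k) : ℤ) else 0))
    (hY : ∀ p, n - r < p → bY p = 0) :
    ∑ j ∈ Finset.range (n + 1), (-1 : ℤ) ^ (j + r) * (j.choose r : ℤ) * (bX j : ℤ)
      = ∑ p ∈ Finset.range (n + 1), (-1 : ℤ) ^ p * (bY p : ℤ) := by
  calc ∑ j ∈ Finset.range (n + 1), (-1 : ℤ) ^ (j + r) * (j.choose r : ℤ) * (bX j : ℤ)
      = ∑ j ∈ Finset.range (n + 1), ∑ k ∈ Finset.range (r + 1),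
          (-1 : ℤ) ^ (j + r) * (j.choose r : ℤ) *
            ((r.choose k : ℤ) * (if k ≤ j then (bY (j - k) : ℤ) else 0)) := by
        simp only [hb, Finset.mul_sum]
    _ = ∑ k ∈ Finset.range (r + 1), ∑ j ∈ Finset.range (n + 1),
          (-1 : ℤ) ^ (j + r) * (j.choose r : ℤ) *
            ((r.choose k : ℤ) * (if k ≤ j then (bY (j - k) : ℤ) else 0)) := Finset.sum_comm
    _ = ∑ k ∈ Finset.range (r + 1), ∑ p ∈ Finset.range (n + 1),
          (-1 : ℤ) ^ p * (bY p : ℤ) *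
            ((-1 : ℤ) ^ (k + r) * (r.choose k : ℤ) * ((p + k).choose r : ℤ)) := by
        refine Finset.sum_congr rfl fun k hk => ?_
        rw [Finset.mem_range] at hk
        have hkr : k ≤ r := by omega
        set f : ℕ → ℤ := fun j => (-1 : ℤ) ^ (j + r) * (j.choose r : ℤ) *
            ((r.choose k : ℤ) * (if k ≤ j then (bY (j - k) : ℤ) else 0)) with hf
        set g : ℕ → ℤ := fun p => (-1 : ℤ) ^ p * (bY p : ℤ) *
            ((-1 : ℤ) ^ (k + r) * (r.choose k : ℤ) * ((p + k).choose r : ℤ)) with hg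
        have step1 : ∑ j ∈ Finset.range (n + 1), f j = ∑ j ∈ Finset.Ico k (n + 1), f j := by
          rw [← Finset.sum_range_add_sum_Ico f (show k ≤ n + 1 by omega)]
          have : ∑ j ∈ Finset.range k, f j = 0 := by
            refine Finset.sum_eq_zero fun j hj => ?_
            rw [Finset.mem_range] at hj
            simp only [hf]
            rw [if_neg (by omega)]
            ring
          rw [this, zero_add]
        have step2 : ∑ j ∈ Finset.Ico k (n + 1), f j
            = ∑ p ∈ Finset.range (n + 1 - k), g p := by
          rw [Finset.sum_Ico_eq_sum_range]
          refine Finset.sum_congr rfl fun p _ => ?_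
          simp only [hf, hg]
          rw [if_pos (by omega), show k + p - k = p by omega,
            show k + p = p + k by ring, show (p + k) + r = p + (k + r) by ring, pow_add]
          ring
        have step3 : ∑ p ∈ Finset.range (n + 1 - k), g p
            = ∑ p ∈ Finset.range (n + 1), g p := by
          rw [← Finset.sum_range_add_sum_Ico g (show n + 1 - k ≤ n + 1 by omega)]
          have : ∑ p ∈ Finset.Ico (n + 1 - k) (n + 1), g p = 0 := by
            refine Finset.sum_eq_zero fun p hp => ?_
            rw [Finset.mem_Ico] at hp
            have : bY p = 0 := hY p (by omega)
            simp only [hg, this]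
            push_cast
            ring
          rw [this, add_zero]
        rw [step1, step2, step3]
    _ = ∑ p ∈ Finset.range (n + 1), ∑ k ∈ Finset.range (r + 1),
          (-1 : ℤ) ^ p * (bY p : ℤ) *
            ((-1 : ℤ) ^ (k + r) * (r.choose k : ℤ) * ((p + k).choose r : ℤ)) := Finset.sum_comm
    _ = ∑ p ∈ Finset.range (n + 1), (-1 : ℤ) ^ p * (bY p : ℤ) := by
        refine Finset.sum_congr rfl fun p _ => ?_
        rw [← Finset.mul_sum, chi_key_identity r p, mul_one]
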